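/- arXiv:0911.2128 — 5 statements merged into one kernel-verified Lean document; each statement's English description precedes it below -/
import Mathlib

section
/- Let Q be a quadratic form on an n-dimensional 𝔽₂-vector space with radical W (of its polarization) of dimension w, and suppose the restriction of Q to W is not identically zero. Then the character sum S = Σ_{x} (−1)^{Q(x)} equals 0, i.e., |{x : Q(x) = 0}| = 2^{n−1}. -/
open Finset

/-- If `Q` is a quadratic form on an `n`-dimensional `𝔽₂`-vector space whose
restriction to the radical `W` of its polarization is not identically zero
(odd rank case), then `∑ x, (-1)^{Q(x)} = 0`, i.e. `|{x : Q x = 0}| = 2^{n-1}`. -/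
theorem char_sum_eq_zero_of_odd_rank
    (n : ℕ) (hn : 0 < n) (F : Type*) [AddCommGroup F] [Module (ZMod 2) F]
    [Fintype F] [DecidableEq F]
    (hdim : Module.finrank (ZMod 2) F = n)
    (Q : F → ZMod 2)
    (hQ : ∀ (c : ZMod 2) (x : F), Q (c • x) = c ^ 2 * Q x)
    (B : F → F → ZMod 2)
    (hB : ∀ x y, B x y = Q (x + y) + Q x + Q y)
    (hBadd : ∀ x y z, B (x + y) z = B x z + B y z)
    (W : Set F)
    (hW : W = {x : F | ∀ y, B x y = 0})
    (hQW : ∃ x ∈ W, Q x ≠ 0) :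
    (∑ x : F, (-1 : ℤ) ^ (Q x).val = 0) ∧
    (Finset.univ.filter (fun x : F => Q x = 0)).card = 2 ^ (n - 1) := by
  obtain ⟨w, hw, hQw⟩ := hQW
  have hQw1 : Q w = 1 := by
    have h : ∀ a : ZMod 2, a ≠ 0 → a = 1 := by decide
    exact h _ hQw
  have hkey : ∀ x, Q (x + w) = Q x + 1 := by
    intro x
    have h2 : B x w = 0 := by
      have hsym : B x w = B w x := by rw [hB, hB, add_comm x w]; ring
      rw [hsym]
      have := hW ▸ hw
      exact this x
    have h1 := hB x w
    rw [h2, hQw1] at h1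
    revert h1
    generalize Q (x + w) = a
    generalize Q x = b
    revert a b; decide
  have hre : ∑ x : F, (-1 : ℤ) ^ (Q (x + w)).val = ∑ x : F, (-1 : ℤ) ^ (Q x).val :=
    Fintype.sum_equiv (Equiv.addRight w) _ _ (fun x => rfl)
  have hneg : ∑ x : F, (-1 : ℤ) ^ (Q (x + w)).val = -∑ x : F, (-1 : ℤ) ^ (Q x).val := by
    rw [← Finset.sum_neg_distrib]
    apply Finset.sum_congr rfl
    intro x _
    rw [hkey]
    have h : ∀ a : ZMod 2, (-1 : ℤ) ^ ((a + 1).val) = -(-1 : ℤ) ^ a.val := by decide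
    exact h _
  have hsum : ∑ x : F, (-1 : ℤ) ^ (Q x).val = 0 := by linarith [hre.symm.trans hneg]
  refine ⟨hsum, ?_⟩
  have hcardF : Fintype.card F = 2 ^ n := by
    have := Module.card_eq_pow_finrank (K := ZMod 2) (V := F)
    simpa [hdim, ZMod.card] using this
  have hsplit := Finset.sum_filter_add_sum_filter_not Finset.univ
    (fun x : F => Q x = 0) (fun x => (-1 : ℤ) ^ (Q x).val)
  have h0 : ∑ x ∈ Finset.univ.filter (fun x : F => Q x = 0), (-1 : ℤ) ^ (Q x).val
      = (Finset.univ.filter (fun x : F => Q x = 0)).card := by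
    rw [Finset.sum_congr rfl (fun x hx => show (-1 : ℤ) ^ (Q x).val = 1 by
      rw [(Finset.mem_filter.mp hx).2]; simp)]
    simp
  have h1 : ∑ x ∈ Finset.univ.filter (fun x : F => ¬Q x = 0), (-1 : ℤ) ^ (Q x).val
      = -(Finset.univ.filter (fun x : F => ¬Q x = 0)).card := by
    have h : ∀ a : ZMod 2, a ≠ 0 → (-1 : ℤ) ^ a.val = -1 := by decide
    rw [Finset.sum_congr rfl (fun x hx => h _ (Finset.mem_filter.mp hx).2)]
    simp
  rw [h0, h1, hsum] at hsplit
  have hc := Finset.card_filter_add_card_filter_not (s := Finset.univ)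
    (p := fun x : F => Q x = 0)
  rw [Finset.card_univ, hcardF] at hc
  have h2n : 2 ^ n = 2 * 2 ^ (n - 1) := by
    conv_lhs => rw [show n = (n - 1) + 1 from (Nat.succ_pred_eq_of_pos hn).symm]
    ring
  omega
end

section
/- Let q = 2^n and f, a, b ∈ 𝔽_q. For S = Σ_{x ∈ 𝔽_q} (−1)^{Tr(f x⁹ + a x⁵ + b x³ + c x)}, one has S² = q · Σ_{u ∈ W} (−1)^{Tr(f u⁹ + a u⁵ + b u³ + c u)}, where W = {u ∈ 𝔽_q : f u + f⁸ u⁶⁴ + a² u² + a⁸ u³² + b⁴ u⁴ + b⁸ u¹⁶ = 0}. -/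
open Finset

lemma zmod2_pow_add (s t : ZMod 2) :
    (-1 : ℤ) ^ (s + t).val = (-1) ^ s.val * (-1) ^ t.val := by
  revert s t; decide

lemma zmod2_pow_ne_zero (s : ZMod 2) (h : s ≠ 0) : (-1 : ℤ) ^ s.val = -1 := by
  revert s; decide

/-- character shorthand -/
noncomputable def chK (K : Type*) [Field K] [Fintype K] [Algebra (ZMod 2) K] (z : K) : ℤ :=
  (-1) ^ (Algebra.trace (ZMod 2) K z).val

section Aux

variable (K : Type*) [Field K] [Fintype K] [DecidableEq K] [Algebra (ZMod 2) K]

lemma charK : CharP K 2 := by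
  haveI : Fact (Nat.Prime 2) := ⟨Nat.prime_two⟩
  exact charP_of_injective_algebraMap (algebraMap (ZMod 2) K).injective 2

lemma trace_sq (z : K) :
    Algebra.trace (ZMod 2) K (z ^ 2) = Algebra.trace (ZMod 2) K z := by
  haveI : Fact (Nat.Prime 2) := ⟨Nat.prime_two⟩
  haveI : CharP K 2 := charK K
  let φ : K →ₐ[ZMod 2] K :=
    { toRingHom := frobenius K 2
      commutes' := fun r => by
        show algebraMap (ZMod 2) K r ^ 2 = algebraMap (ZMod 2) K r
        rw [← map_pow]
        congr 1
        have : r ^ 2 = r := ZMod.pow_card r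
        simpa using this }
  have hbij : Function.Bijective φ :=
    Finite.injective_iff_bijective.mp (frobenius_inj K 2)
  let e : K ≃ₐ[ZMod 2] K := AlgEquiv.ofBijective φ hbij
  have := Algebra.trace_eq_of_algEquiv e z
  have he : e z = z ^ 2 := rfl
  rw [he] at this
  exact this

lemma ch_add (z w : K) : chK K (z + w) = chK K z * chK K w := by
  unfold chK
  rw [map_add]
  exact zmod2_pow_add _ _

lemma ch_sum (t : K) :
    (∑ y : K, chK K (y * t)) = if t = 0 then (Fintype.card K : ℤ) else 0 := by
  haveI : Fact (Nat.Prime 2) := ⟨Nat.prime_two⟩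
  haveI : FiniteDimensional (ZMod 2) K := Module.Finite.of_finite
  by_cases ht : t = 0
  · simp [ht, chK]
  · rw [if_neg ht]
    obtain ⟨y0, hy0⟩ : ∃ y0, Algebra.trace (ZMod 2) K (t * y0) ≠ 0 := by
      by_contra hf
      push_neg at hf
      exact ht ((traceForm_nondegenerate (ZMod 2) K).1 t
        (fun y => by simpa [Algebra.traceForm_apply] using hf y))
    have hy1 : chK K (y0 * t) = -1 := by
      unfold chK
      rw [mul_comm]
      exact zmod2_pow_ne_zero _ hy0
    have hre : (∑ y : K, chK K ((y + y0) * t)) = ∑ y : K, chK K (y * t) :=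
      Fintype.sum_equiv (Equiv.addRight y0) _ _ (fun y => rfl)
    have hpt : ∀ y : K, chK K ((y + y0) * t) = chK K (y * t) * (-1) := by
      intro y
      rw [add_mul, ch_add, hy1]
    rw [Finset.sum_congr rfl (fun y _ => hpt y)] at hre
    rw [← Finset.sum_mul] at hre
    linarith

lemma general (g L : K → K)
    (key : ∀ x u : K, Algebra.trace (ZMod 2) K (g x + g (x + u)) =
      Algebra.trace (ZMod 2) K (g u + x ^ 8 * L u)) :
    (∑ x : K, chK K (g x)) ^ 2 =
      (Fintype.card K : ℤ) *
        ∑ u ∈ Finset.univ.filter (fun u : K => L u = 0), chK K (g u) := by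
  haveI : Fact (Nat.Prime 2) := ⟨Nat.prime_two⟩
  haveI : CharP K 2 := charK K
  have hsq_inj : Function.Injective (fun z : K => z ^ 2) := by
    intro z w h
    exact frobenius_inj K 2 (by simpa [frobenius_def] using h)
  have h8 : Function.Bijective (fun x : K => x ^ 8) := by
    have hcomp : (fun x : K => x ^ 8) =
        (fun z : K => z ^ 2) ∘ (fun z : K => z ^ 2) ∘ (fun z : K => z ^ 2) := by
      funext x; simp; ring
    rw [hcomp]
    exact Finite.injective_iff_bijective.mp (hsq_inj.comp (hsq_inj.comp hsq_inj))
  calc (∑ x : K, chK K (g x)) ^ 2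
      = ∑ x : K, ∑ y : K, chK K (g x) * chK K (g y) := by
        rw [sq, Finset.sum_mul_sum]
    _ = ∑ x : K, ∑ u : K, chK K (g u) * chK K (x ^ 8 * L u) := by
        refine Finset.sum_congr rfl fun x _ => ?_
        rw [← Fintype.sum_equiv (Equiv.addLeft x)
          (fun u : K => chK K (g x) * chK K (g (x + u)))
          (fun y : K => chK K (g x) * chK K (g y)) (fun u => rfl)]
        refine Finset.sum_congr rfl fun u _ => ?_
        rw [← ch_add, ← ch_add]
        unfold chK
        rw [key x u]
    _ = ∑ u : K, ∑ x : K, chK K (g u) * chK K (x ^ 8 * L u) := Finset.sum_comm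
    _ = ∑ u : K, chK K (g u) * ∑ x : K, chK K (x ^ 8 * L u) := by
        simp [Finset.mul_sum]
    _ = ∑ u : K, chK K (g u) * ∑ y : K, chK K (y * L u) := by
        refine Finset.sum_congr rfl fun u _ => ?_
        congr 1
        exact Fintype.sum_bijective (fun x : K => x ^ 8) h8 _ _ (fun x => rfl)
    _ = ∑ u : K, chK K (g u) * (if L u = 0 then (Fintype.card K : ℤ) else 0) := by
        refine Finset.sum_congr rfl fun u _ => ?_
        rw [ch_sum]
    _ = ∑ u : K, (Fintype.card K : ℤ) * (if L u = 0 then chK K (g u) else 0) := by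
        refine Finset.sum_congr rfl fun u _ => ?_
        by_cases h : L u = 0 <;> simp [h, mul_comm]
    _ = (Fintype.card K : ℤ) *
        ∑ u ∈ Finset.univ.filter (fun u : K => L u = 0), chK K (g u) := by
        rw [← Finset.mul_sum, Finset.sum_filter]

end Aux

/-- For `S = ∑_{x ∈ 𝔽_q} (−1)^{Tr(f x⁹ + a x⁵ + b x³ + c x)}` one has
`S² = q · ∑_{u ∈ W} (−1)^{Tr(f u⁹ + a u⁵ + b u³ + c u)}`, where
`W = {u : f u + f⁸ u⁶⁴ + a² u² + a⁸ u³² + b⁴ u⁴ + b⁸ u¹⁶ = 0}`. -/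
theorem char_sum_squared
    (n : ℕ) (hn : 0 < n) (K : Type*) [Field K] [Fintype K] [DecidableEq K]
    [Algebra (ZMod 2) K] (hcard : Fintype.card K = 2 ^ n)
    (f a b c : K) :
    (∑ x : K, (-1 : ℤ) ^ (Algebra.trace (ZMod 2) K
        (f * x ^ 9 + a * x ^ 5 + b * x ^ 3 + c * x)).val) ^ 2 =
    2 ^ n * ∑ u ∈ Finset.univ.filter (fun u : K =>
        f * u + f ^ 8 * u ^ 64 + a ^ 2 * u ^ 2 + a ^ 8 * u ^ 32
          + b ^ 4 * u ^ 4 + b ^ 8 * u ^ 16 = 0),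
      (-1 : ℤ) ^ (Algebra.trace (ZMod 2) K
        (f * u ^ 9 + a * u ^ 5 + b * u ^ 3 + c * u)).val := by
  haveI : Fact (Nat.Prime 2) := ⟨Nat.prime_two⟩
  haveI : CharP K 2 := charK K
  set T := Algebra.trace (ZMod 2) K with hT
  have tr2 : ∀ z : K, T (z ^ 2) = T z := trace_sq K
  have tr4 : ∀ z : K, T (z ^ 4) = T z := by
    intro z
    rw [show z ^ 4 = (z ^ 2) ^ 2 by ring, tr2, tr2]
  have tr8 : ∀ z : K, T (z ^ 8) = T z := by
    intro z
    rw [show z ^ 8 = (z ^ 4) ^ 2 by ring, tr2, tr4]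
  have hsq : ∀ z w : K, (z + w) ^ 2 = z ^ 2 + w ^ 2 := fun z w => add_pow_char ..
  have key : ∀ x u : K,
      T ((f * x ^ 9 + a * x ^ 5 + b * x ^ 3 + c * x)
        + (f * (x + u) ^ 9 + a * (x + u) ^ 5 + b * (x + u) ^ 3 + c * (x + u))) =
      T ((f * u ^ 9 + a * u ^ 5 + b * u ^ 3 + c * u)
        + x ^ 8 * (f * u + f ^ 8 * u ^ 64 + a ^ 2 * u ^ 2 + a ^ 8 * u ^ 32
          + b ^ 4 * u ^ 4 + b ^ 8 * u ^ 16)) := by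
    intro x u
    have e4 : (x + u) ^ 4 = x ^ 4 + u ^ 4 := by
      rw [show (x + u) ^ 4 = ((x + u) ^ 2) ^ 2 by ring, hsq, hsq]; ring
    have e8 : (x + u) ^ 8 = x ^ 8 + u ^ 8 := by
      rw [show (x + u) ^ 8 = ((x + u) ^ 4) ^ 2 by ring, e4, hsq]; ring
    have e9 : (x + u) ^ 9 = x ^ 9 + x ^ 8 * u + x * u ^ 8 + u ^ 9 := by
      rw [show (x + u) ^ 9 = (x + u) ^ 8 * (x + u) by ring, e8]; ring
    have e5 : (x + u) ^ 5 = x ^ 5 + x ^ 4 * u + x * u ^ 4 + u ^ 5 := by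
      rw [show (x + u) ^ 5 = (x + u) ^ 4 * (x + u) by ring, e4]; ring
    have e3 : (x + u) ^ 3 = x ^ 3 + x ^ 2 * u + x * u ^ 2 + u ^ 3 := by
      rw [show (x + u) ^ 3 = (x + u) ^ 2 * (x + u) by ring, hsq]; ring
    have h2 : (2 : K) = 0 := CharTwo.two_eq_zero
    have hh : (f * x ^ 9 + a * x ^ 5 + b * x ^ 3 + c * x)
        + (f * (x + u) ^ 9 + a * (x + u) ^ 5 + b * (x + u) ^ 3 + c * (x + u)) =
        (f * u ^ 9 + a * u ^ 5 + b * u ^ 3 + c * u)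
        + (x ^ 8 * (f * u) + f * x * u ^ 8 + a * x ^ 4 * u + a * x * u ^ 4
          + b * x ^ 2 * u + b * x * u ^ 2) := by
      linear_combination f * e9 + a * e5 + b * e3
        + (f * x ^ 9 + a * x ^ 5 + b * x ^ 3 + c * x) * h2
    rw [hh]
    have expand : (f * u ^ 9 + a * u ^ 5 + b * u ^ 3 + c * u)
        + x ^ 8 * (f * u + f ^ 8 * u ^ 64 + a ^ 2 * u ^ 2 + a ^ 8 * u ^ 32
          + b ^ 4 * u ^ 4 + b ^ 8 * u ^ 16) =
        (f * u ^ 9 + a * u ^ 5 + b * u ^ 3 + c * u)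
        + (x ^ 8 * (f * u) + (f * x * u ^ 8) ^ 8 + (a * x ^ 4 * u) ^ 2
          + (a * x * u ^ 4) ^ 8 + (b * x ^ 2 * u) ^ 4 + (b * x * u ^ 2) ^ 8) := by
      ring
    rw [expand]
    simp only [map_add]
    rw [tr8 (f * x * u ^ 8), tr2 (a * x ^ 4 * u), tr8 (a * x * u ^ 4),
      tr4 (b * x ^ 2 * u), tr8 (b * x * u ^ 2)]
  have main := general K
    (fun x => f * x ^ 9 + a * x ^ 5 + b * x ^ 3 + c * x)
    (fun u => f * u + f ^ 8 * u ^ 64 + a ^ 2 * u ^ 2 + a ^ 8 * u ^ 32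
      + b ^ 4 * u ^ 4 + b ^ 8 * u ^ 16)
    key
  have hc : (Fintype.card K : ℤ) = 2 ^ n := by rw [hcard]; push_cast; ring
  rw [hc] at main
  exact main
end

section
/- Let q = 2^n and f, a, b, c ∈ 𝔽_q. Define Q : 𝔽_q → 𝔽₂ by Q(x) = Tr(f x⁹ + a x⁵ + b x³ + c x). Then Q is a quadratic form (over 𝔽₂) and the radical of its polarization B(x,y) = Q(x+y) + Q(x) + Q(y) equals W = {u ∈ 𝔽_q : f u + f⁸ u⁶⁴ + a² u² + a⁸ u³² + b⁴ u⁴ + b⁸ u¹⁶ = 0}. -/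
/-- `Q(x) = Tr(f x⁹ + a x⁵ + b x³ + c x)` is a quadratic form over `𝔽₂`
(its polarization `B(x,y) = Q(x+y) + Q(x) + Q(y)` is bilinear and
`Q(c•x) = c²Q(x)`), and the radical of `B` equals
`W = {u : f u + f⁸ u⁶⁴ + a² u² + a⁸ u³² + b⁴ u⁴ + b⁸ u¹⁶ = 0}`. -/
theorem trace_form_is_quadratic_with_radical
    (n : ℕ) (hn : 0 < n) (K : Type*) [Field K] [Fintype K]
    [Algebra (ZMod 2) K] (hcard : Fintype.card K = 2 ^ n)
    (f a b c : K)
    (Q : K → ZMod 2)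
    (hQdef : ∀ x, Q x = Algebra.trace (ZMod 2) K
        (f * x ^ 9 + a * x ^ 5 + b * x ^ 3 + c * x))
    (B : K → K → ZMod 2)
    (hBdef : ∀ x y, B x y = Q (x + y) + Q x + Q y) :
    (∀ (s : ZMod 2) (x : K), Q (s • x) = s ^ 2 * Q x) ∧
    (∀ x y z, B (x + y) z = B x z + B y z) ∧
    (∀ x y z, B x (y + z) = B x y + B x z) ∧
    (∀ (s : ZMod 2) (x y : K), B (s • x) y = s * B x y) ∧
    {x : K | ∀ y, B x y = 0} =
      {u : K | f * u + f ^ 8 * u ^ 64 + a ^ 2 * u ^ 2 + a ^ 8 * u ^ 32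
          + b ^ 4 * u ^ 4 + b ^ 8 * u ^ 16 = 0} := by
  haveI hchar : CharP K 2 :=
    charP_of_injective_algebraMap (algebraMap (ZMod 2) K).injective 2
  have hK2 : (2 : K) = 0 := CharP.cast_eq_zero K 2
  haveI : ExpChar K 2 := ExpChar.prime Nat.prime_two
  set Tr : K →ₗ[ZMod 2] K →ₗ[ZMod 2] (ZMod 2) :=
    Algebra.traceForm (ZMod 2) K with hTr
  -- the Frobenius algebra equivalence over ZMod 2
  have σcomm : ∀ r : ZMod 2,
      frobeniusEquiv K 2 (algebraMap (ZMod 2) K r) = algebraMap (ZMod 2) K r := by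
    intro r
    have hr : ∀ r : ZMod 2, r ^ 2 = r := by decide
    rw [frobeniusEquiv_def, ← map_pow, hr]
  let σ : K ≃ₐ[ZMod 2] K := AlgEquiv.ofRingEquiv σcomm
  have trace_sq : ∀ t : K,
      Algebra.trace (ZMod 2) K (t ^ 2) = Algebra.trace (ZMod 2) K t := by
    intro t
    have := Algebra.trace_eq_of_algEquiv σ t
    simpa [σ, AlgEquiv.ofRingEquiv, frobeniusEquiv_def, frobenius_def] using this
  have t2 : ∀ t : K, Algebra.trace (ZMod 2) K t
      = Algebra.trace (ZMod 2) K (t ^ 2) := fun t => (trace_sq t).symm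
  have t4 : ∀ t : K, Algebra.trace (ZMod 2) K t
      = Algebra.trace (ZMod 2) K (t ^ 4) := by
    intro t
    rw [t2 t, t2 (t ^ 2)]
    ring_nf
  have t8 : ∀ t : K, Algebra.trace (ZMod 2) K t
      = Algebra.trace (ZMod 2) K (t ^ 8) := by
    intro t
    rw [t4 t, t2 (t ^ 4)]
    ring_nf
  -- key formula for B
  have key : ∀ x y : K, B x y = Algebra.trace (ZMod 2) K
      (f * (x * y ^ 8 + x ^ 8 * y) + a * (x * y ^ 4 + x ^ 4 * y)
        + b * (x ^ 2 * y + x * y ^ 2)) := by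
    intro x y
    rw [hBdef, hQdef, hQdef, hQdef, ← map_add, ← map_add]
    congr 1
    linear_combination hK2 * (c*y + c*x + b*y^3 + b*x*y^2 + b*x^2*y + b*x^3 + a*y^5
      + 2*a*x*y^4 + 5*a*x^2*y^3 + 5*a*x^3*y^2 + 2*a*x^4*y + a*x^5 + f*y^9 + 4*f*x*y^8
      + 18*f*x^2*y^7 + 42*f*x^3*y^6 + 63*f*x^4*y^5 + 63*f*x^5*y^4 + 42*f*x^6*y^3
      + 18*f*x^7*y^2 + 4*f*x^8*y + f*x^9)
  -- key formula with y-exponent 8 everywhere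
  have key8 : ∀ x y : K, B x y = Algebra.trace (ZMod 2) K
      ((f * x + f ^ 8 * x ^ 64 + a ^ 2 * x ^ 2 + a ^ 8 * x ^ 32
          + b ^ 4 * x ^ 4 + b ^ 8 * x ^ 16) * y ^ 8) := by
    intro x y
    rw [key]
    have e1 : f * (x * y ^ 8 + x ^ 8 * y) + a * (x * y ^ 4 + x ^ 4 * y)
        + b * (x ^ 2 * y + x * y ^ 2)
        = f * x * y ^ 8 + (f * x ^ 8 * y + (a * x * y ^ 4 + (a * x ^ 4 * y
          + (b * x ^ 2 * y + b * x * y ^ 2)))) := by ring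
    rw [e1, map_add, map_add, map_add, map_add, map_add]
    have h1 : Algebra.trace (ZMod 2) K (f * x ^ 8 * y)
        = Algebra.trace (ZMod 2) K (f ^ 8 * x ^ 64 * y ^ 8) := by
      rw [t8 (f * x ^ 8 * y)]; congr 1; ring
    have h2 : Algebra.trace (ZMod 2) K (a * x * y ^ 4)
        = Algebra.trace (ZMod 2) K (a ^ 2 * x ^ 2 * y ^ 8) := by
      rw [t2 (a * x * y ^ 4)]; congr 1; ring
    have h3 : Algebra.trace (ZMod 2) K (a * x ^ 4 * y)
        = Algebra.trace (ZMod 2) K (a ^ 8 * x ^ 32 * y ^ 8) := by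
      rw [t8 (a * x ^ 4 * y)]; congr 1; ring
    have h4 : Algebra.trace (ZMod 2) K (b * x ^ 2 * y)
        = Algebra.trace (ZMod 2) K (b ^ 8 * x ^ 16 * y ^ 8) := by
      rw [t8 (b * x ^ 2 * y)]; congr 1; ring
    have h5 : Algebra.trace (ZMod 2) K (b * x * y ^ 2)
        = Algebra.trace (ZMod 2) K (b ^ 4 * x ^ 4 * y ^ 8) := by
      rw [t4 (b * x * y ^ 2)]; congr 1; ring
    rw [h1, h2, h3, h4, h5, ← map_add, ← map_add, ← map_add, ← map_add, ← map_add]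
    congr 1; ring
  refine ⟨?_, ?_, ?_, ?_, ?_⟩
  · intro s x
    fin_cases s
    · show Q ((0 : ZMod 2) • x) = (0 : ZMod 2) ^ 2 * Q x
      rw [zero_smul, hQdef]
      simp
    · show Q ((1 : ZMod 2) • x) = (1 : ZMod 2) ^ 2 * Q x
      rw [one_smul, one_pow, one_mul]
  · intro x y z
    rw [key, key, key, ← map_add]
    congr 1
    linear_combination hK2 * (b*x*y*z + 2*a*x*y^3*z + 3*a*x^2*y^2*z + 2*a*x^3*y*z
      + 4*f*x*y^7*z + 14*f*x^2*y^6*z + 28*f*x^3*y^5*z + 35*f*x^4*y^4*z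
      + 28*f*x^5*y^3*z + 14*f*x^6*y^2*z + 4*f*x^7*y*z)
  · intro x y z
    rw [key, key, key, ← map_add]
    congr 1
    linear_combination hK2 * (b*x*y*z + 2*a*x*y*z^3 + 3*a*x*y^2*z^2 + 2*a*x*y^3*z
      + 4*f*x*y*z^7 + 14*f*x*y^2*z^6 + 28*f*x*y^3*z^5 + 35*f*x*y^4*z^4
      + 28*f*x*y^5*z^3 + 14*f*x*y^6*z^2 + 4*f*x*y^7*z)
  · intro s x y
    fin_cases s
    · show B ((0 : ZMod 2) • x) y = (0 : ZMod 2) * B x y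
      rw [zero_smul, key, zero_mul]
      simp
    · show B ((1 : ZMod 2) • x) y = (1 : ZMod 2) * B x y
      rw [one_smul, one_mul]
  · have hsurj : Function.Surjective (fun t : K => t ^ 2) := by
      have : Function.Injective (fun t : K => t ^ 2) := by
        intro u v huv
        have : (u - v) ^ 2 = 0 := by
          simp only at huv
          linear_combination huv + hK2 * (v^2 - u*v)
        exact sub_eq_zero.mp (pow_eq_zero_iff two_ne_zero |>.mp this)
      exact Finite.injective_iff_surjective.mp this
    have hsurj8 : ∀ z : K, ∃ y : K, y ^ 8 = z := by
      intro z
      obtain ⟨y1, h1⟩ := hsurj z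
      obtain ⟨y2, h2⟩ := hsurj y1
      obtain ⟨y3, h3⟩ := hsurj y2
      exact ⟨y3, by simp only at h1 h2 h3; rw [← h1, ← h2, ← h3]; ring⟩
    ext u
    simp only [Set.mem_setOf_eq]
    constructor
    · intro h
      have hz : ∀ z : K, Algebra.trace (ZMod 2) K
          ((f * u + f ^ 8 * u ^ 64 + a ^ 2 * u ^ 2 + a ^ 8 * u ^ 32
            + b ^ 4 * u ^ 4 + b ^ 8 * u ^ 16) * z) = 0 := by
        intro z
        obtain ⟨y, hy⟩ := hsurj8 z
        rw [← hy, ← key8]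
        exact h y
      exact (traceForm_nondegenerate (ZMod 2) K).1 _ fun z => by
        simpa only [Algebra.traceForm_apply] using hz z
    · intro h y
      rw [key8, h, zero_mul, map_zero]
end

section
/- Let n be odd and q = 2^n. There is no choice of f, a, b, c, d ∈ 𝔽_q with f ≠ 0 such that the curve y² + y = f x⁹ + a x⁵ + b x³ + c x + d has exactly q + 1 ± 3·2^{(n+1)/2} rational points over 𝔽_q. -/
open Finset

private lemma sum_pm_eq {K : Type*} [AddCommGroup K] [DecidableEq K]
    (W : Finset K) (ε : K → ℤ)
    (hval : ∀ w ∈ W, ε w = 1 ∨ ε w = -1)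
    (hmul : ∀ w1 ∈ W, ∀ w2 ∈ W, ε (w1 + w2) = ε w1 * ε w2)
    (hclosed : ∀ w1 ∈ W, ∀ w2 ∈ W, w1 + w2 ∈ W)
    (hself : ∀ u : K, u + u = 0) :
    (∀ w ∈ W, ε w = 1) ∨ (∑ w ∈ W, ε w) = 0 := by
  by_cases hex : ∃ w0 ∈ W, ε w0 = -1
  · obtain ⟨w0, hw0W, hw0⟩ := hex
    right
    have hmem : ∀ w : K, w ∈ W ↔ (Equiv.addRight w0) w ∈ W := by
      intro w
      constructor
      · intro hw; exact hclosed w hw w0 hw0W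
      · intro hw
        have h2 := hclosed _ hw w0 hw0W
        have : w + w0 + w0 = w := by rw [add_assoc, hself, add_zero]
        simpa [Equiv.addRight, this] using h2
    have key : ∑ w ∈ W, ε (w + w0) = ∑ w ∈ W, ε w :=
      Finset.sum_equiv (Equiv.addRight w0) hmem (fun i _ => rfl)
    have key2 : ∑ w ∈ W, ε (w + w0) = (∑ w ∈ W, ε w) * ε w0 := by
      rw [Finset.sum_congr rfl (fun w hw => hmul w hw w0 hw0W), ← Finset.sum_mul]
    rw [key] at key2
    rw [hw0] at key2
    linarith
  · push_neg at hex
    left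
    intro w hw
    rcases hval w hw with h | h
    · exact h
    · exact absurd h (hex w hw)

private lemma card_filter_prod {K : Type*} [Fintype K] [DecidableEq K]
    (Q : K × K → Prop) [DecidablePred Q] :
    (Finset.univ.filter Q).card = ∑ x : K, (Finset.univ.filter fun y => Q (x, y)).card := by
  rw [Finset.card_eq_sum_card_fiberwise (f := Prod.fst) (t := Finset.univ)
    (fun x _ => Finset.mem_univ _)]
  refine Finset.sum_congr rfl fun x _ => ?_
  refine Finset.card_nbij' (fun p => p.2) (fun y => (x, y)) ?_ ?_ ?_ ?_
  · intro p hp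
    simp only [Finset.mem_coe, Finset.mem_filter, Finset.mem_univ, true_and] at hp ⊢
    obtain ⟨hQ, hfst⟩ := hp
    rwa [← hfst]
  · intro y hy
    simp only [Finset.mem_coe, Finset.mem_filter, Finset.mem_univ, true_and] at hy
    exact Finset.mem_filter.mpr ⟨Finset.mem_filter.mpr ⟨Finset.mem_univ _, hy⟩, rfl⟩
  · intro p hp
    simp only [Finset.mem_coe, Finset.mem_filter] at hp
    have : p.1 = x := hp.2
    simp [← this]
  · intro y hy
    rfl

/-- Let `n` be odd, `q = 2^n`.  There are no `f, a, b, c, d ∈ 𝔽_q` with `f ≠ 0`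
such that the curve `y² + y = f x⁹ + a x⁵ + b x³ + c x + d` (affine points plus
the single point at infinity) has exactly `q + 1 ± 3·2^{(n+1)/2}` rational
points over `𝔽_q`. -/
theorem no_curve_with_three_sqrt_trace
    (n : ℕ) (hn : Odd n) (K : Type*) [Field K] [Fintype K] [DecidableEq K]
    [Algebra (ZMod 2) K] (hcard : Fintype.card K = 2 ^ n) :
    ¬ ∃ (f a b c d : K), f ≠ 0 ∧
      (((1 + (Finset.univ.filter (fun p : K × K =>
          p.2 ^ 2 + p.2 = f * p.1 ^ 9 + a * p.1 ^ 5 + b * p.1 ^ 3 + c * p.1 + d)).card : ℤ)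
            = 2 ^ n + 1 + 3 * 2 ^ ((n + 1) / 2)) ∨
       ((1 + (Finset.univ.filter (fun p : K × K =>
          p.2 ^ 2 + p.2 = f * p.1 ^ 9 + a * p.1 ^ 5 + b * p.1 ^ 3 + c * p.1 + d)).card : ℤ)
            = 2 ^ n + 1 - 3 * 2 ^ ((n + 1) / 2))) := by
  rintro ⟨f, a, b, c, d, hf, hN⟩
  classical
  -- characteristic 2
  have h2 : (2 : K) = 0 := by
    have h := map_ofNat (algebraMap (ZMod 2) K) 2
    rw [show (OfNat.ofNat 2 : ZMod 2) = 0 from rfl, map_zero] at h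
    exact h.symm
  have hself : ∀ u : K, u + u = 0 := fun u => by linear_combination u * h2
  have hneg : ∀ u : K, -u = u := fun u => by linear_combination (-u) * h2
  set P : K → Prop := fun t => ∃ y : K, y ^ 2 + y = t with hP
  have hPadd : ∀ s t : K, P s → P t → P (s + t) := by
    rintro s t ⟨y, hy⟩ ⟨z, hz⟩
    exact ⟨y + z, by linear_combination hy + hz + y * z * h2⟩
  have hPcancel : ∀ s t : K, P s → P (s + t) → P t := by
    intro s t hs hst
    have h := hPadd s (s + t) hs hst
    have e : s + (s + t) = t := by rw [← add_assoc, hself, zero_add]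
    rwa [e] at h
  -- fibers of the Artin–Schreier map
  have hfiber : ∀ t : K,
      (Finset.univ.filter fun y : K => y ^ 2 + y = t).card = if P t then 2 else 0 := by
    intro t
    by_cases ht : P t
    · rw [if_pos ht]
      obtain ⟨y0, hy0⟩ := ht
      have hset : (Finset.univ.filter fun y : K => y ^ 2 + y = t) = {y0, y0 + 1} := by
        ext y
        simp only [Finset.mem_filter, Finset.mem_univ, true_and, Finset.mem_insert,
          Finset.mem_singleton]
        constructor
        · intro hy
          have hz : (y + y0) * (y + y0 + 1) = 0 := by
            linear_combination hy - hy0 + (y * y0 + y0 ^ 2 + y0) * h2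
          rcases mul_eq_zero.mp hz with h | h
          · left; linear_combination h + (-y0) * h2
          · right; linear_combination h + (-y0 - 1) * h2
        · rintro (rfl | rfl)
          · exact hy0
          · linear_combination hy0 + (y0 + 1) * h2
      rw [hset, Finset.card_insert_of_notMem, Finset.card_singleton]
      simp only [Finset.mem_singleton]
      intro hcontra
      exact one_ne_zero (α := K) (by linear_combination -hcontra)
    · rw [if_neg ht, Finset.card_eq_zero]
      ext y
      simp only [Finset.mem_filter, Finset.mem_univ, true_and, Finset.notMem_empty, iff_false]
      intro hy; exact ht ⟨y, hy⟩
  -- the image of the Artin–Schreier map has cardinality 2^(n-1)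
  set A : Finset K := Finset.univ.filter P with hAdef
  have hA2 : 2 * A.card = 2 ^ n := by
    have h1 : (Finset.univ : Finset K).card
        = ∑ t ∈ A, (Finset.univ.filter fun y : K => y ^ 2 + y = t).card :=
      Finset.card_eq_sum_card_fiberwise (f := fun y : K => y ^ 2 + y)
        (fun y _ => Finset.mem_filter.mpr ⟨Finset.mem_univ _, ⟨y, rfl⟩⟩)
    have h3 : ∑ t ∈ A, (Finset.univ.filter fun y : K => y ^ 2 + y = t).card = 2 * A.card := by
      rw [Finset.sum_congr rfl fun t ht => by
        rw [hfiber t, if_pos (Finset.mem_filter.mp ht).2]]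
      rw [Finset.sum_const, smul_eq_mul, mul_comm]
    rw [← h3, ← h1, Finset.card_univ, hcard]
  have hPneg2 : ∀ s t : K, ¬ P s → ¬ P t → P (s + t) := by
    intro s t hs ht
    set B : Finset K := A.image (fun x => x + s) with hB
    have hBcard : B.card = A.card := Finset.card_image_of_injective _ (add_left_injective s)
    have hBsub : B ⊆ Finset.univ \ A := by
      intro u hu
      obtain ⟨x, hxA, rfl⟩ := Finset.mem_image.mp hu
      rw [Finset.mem_sdiff]
      refine ⟨Finset.mem_univ _, fun hcontra => ?_⟩
      exact hs (hPcancel x s (Finset.mem_filter.mp hxA).2 (Finset.mem_filter.mp hcontra).2)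
    have hcompl : (Finset.univ \ A).card = A.card := by
      rw [Finset.card_sdiff_of_subset (Finset.subset_univ A), Finset.card_univ, hcard]
      omega
    have hBeq : B = Finset.univ \ A :=
      Finset.eq_of_subset_of_card_le hBsub (by rw [hBcard, hcompl])
    have htB : t ∈ B := by
      rw [hBeq, Finset.mem_sdiff]
      exact ⟨Finset.mem_univ _, fun hc => ht (Finset.mem_filter.mp hc).2⟩
    obtain ⟨x, hxA, hxe⟩ := Finset.mem_image.mp htB
    have hx : P x := (Finset.mem_filter.mp hxA).2
    have he : s + t = x := by
      rw [← hxe, add_comm x s, ← add_assoc, hself, zero_add]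
    rwa [he]
  -- the quadratic character of the Artin–Schreier image
  set χ : K → ℤ := fun t => if P t then 1 else -1 with hχ
  have hχval : ∀ t, χ t = 1 ∨ χ t = -1 := fun t => by
    by_cases h : P t <;> simp [hχ, h]
  have hχone : ∀ t, χ t = 1 ↔ P t := fun t => by
    by_cases h : P t <;> simp [hχ, h]
  have hχmul : ∀ s t : K, χ (s + t) = χ s * χ t := by
    intro s t
    by_cases hs : P s <;> by_cases ht : P t
    · simp [hχ, hs, ht, hPadd s t hs ht]
    · simp [hχ, hs, ht, show ¬ P (s + t) from fun h => ht (hPcancel s t hs h)]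
    · simp [hχ, hs, ht, show ¬ P (s + t) from fun h =>
        hs (hPcancel t s ht (by rwa [add_comm]))]
    · simp [hχ, hs, ht, hPneg2 s t hs ht]
  -- auxiliary functions
  set g : K → K := fun x => f * x ^ 9 + a * x ^ 5 + b * x ^ 3 + c * x + d with hg
  set L : K → K → K := fun w x =>
    f * (x * w ^ 8 + x ^ 8 * w) + a * (x * w ^ 4 + x ^ 4 * w) + b * (x * w ^ 2 + x ^ 2 * w)
    with hL
  set hh : K → K := fun w => f * w ^ 9 + a * w ^ 5 + b * w ^ 3 + c * w with hhh
  have hgL : ∀ x w : K, g x + g (x + w) = L w x + hh w := by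
    intro x w
    simp only [hg, hL, hhh]
    linear_combination (f * x ^ 9 + a * x ^ 5 + b * x ^ 3 + c * x + d
      + f * (4*x^8*w + 18*x^7*w^2 + 42*x^6*w^3 + 63*x^5*w^4 + 63*x^4*w^5 + 42*x^3*w^6
          + 18*x^2*w^7 + 4*x*w^8)
      + a * (2*x^4*w + 5*x^3*w^2 + 5*x^2*w^3 + 2*x*w^4)
      + b * (x^2*w + x*w^2)) * h2
  have hhhadd : ∀ w1 w2 : K, hh (w1 + w2) = hh w1 + hh w2 + L w1 w2 := by
    intro w1 w2
    simp only [hL, hhh]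
    linear_combination (f * (4*w1^8*w2 + 18*w1^7*w2^2 + 42*w1^6*w2^3 + 63*w1^5*w2^4
        + 63*w1^4*w2^5 + 42*w1^3*w2^6 + 18*w1^2*w2^7 + 4*w1*w2^8)
      + a * (2*w1^4*w2 + 5*w1^3*w2^2 + 5*w1^2*w2^3 + 2*w1*w2^4)
      + b * (w1^2*w2 + w1*w2^2)) * h2
  have hLaddx : ∀ w x1 x2 : K, L w (x1 + x2) = L w x1 + L w x2 := by
    intro w x1 x2
    simp only [hL]
    linear_combination (w * (f * (4*x1^7*x2 + 14*x1^6*x2^2 + 28*x1^5*x2^3 + 35*x1^4*x2^4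
        + 28*x1^3*x2^5 + 14*x1^2*x2^6 + 4*x1*x2^7)
      + a * (2*x1^3*x2 + 3*x1^2*x2^2 + 2*x1*x2^3)
      + b * (x1 * x2))) * h2
  have hLaddw : ∀ x w1 w2 : K, L (w1 + w2) x = L w1 x + L w2 x := by
    intro x w1 w2
    simp only [hL]
    linear_combination (x * (f * (4*w1^7*w2 + 14*w1^6*w2^2 + 28*w1^5*w2^3 + 35*w1^4*w2^4
        + 28*w1^3*w2^5 + 14*w1^2*w2^6 + 4*w1*w2^7)
      + a * (2*w1^3*w2 + 3*w1^2*w2^2 + 2*w1*w2^3)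
      + b * (w1 * w2))) * h2
  -- the point count in terms of the character sum S
  set S : ℤ := ∑ x : K, χ (g x) with hS
  have hcount : ((Finset.univ.filter (fun p : K × K =>
      p.2 ^ 2 + p.2 = f * p.1 ^ 9 + a * p.1 ^ 5 + b * p.1 ^ 3 + c * p.1 + d)).card : ℤ)
      = 2 ^ n + S := by
    have e1 := card_filter_prod (K := K) (fun p : K × K =>
      p.2 ^ 2 + p.2 = f * p.1 ^ 9 + a * p.1 ^ 5 + b * p.1 ^ 3 + c * p.1 + d)
    rw [e1]
    have e2 : ∀ x : K, (Finset.univ.filter fun y : K =>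
        (x, y).2 ^ 2 + (x, y).2
          = f * (x, y).1 ^ 9 + a * (x, y).1 ^ 5 + b * (x, y).1 ^ 3 + c * (x, y).1 + d).card
        = if P (g x) then 2 else 0 := fun x => hfiber (g x)
    push_cast
    rw [Finset.sum_congr rfl fun x _ => congrArg (Nat.cast : ℕ → ℤ) (e2 x)]
    have e3 : ∀ x : K, (Nat.cast (if P (g x) then (2:ℕ) else 0) : ℤ) = 1 + χ (g x) := by
      intro x
      by_cases h : P (g x) <;> simp [hχ, h]
    rw [Finset.sum_congr rfl fun x _ => e3 x, Finset.sum_add_distrib, Finset.sum_const,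
      Finset.card_univ, hcard]
    push_cast
    ring
  -- S = ± 3 · 2^((n+1)/2), so S² = 9 · 2^(n+1)
  obtain ⟨k, hk⟩ := hn
  have hexp : (n + 1) / 2 = k + 1 := by omega
  have hS2 : S ^ 2 = 9 * 2 ^ (n + 1) := by
    have hScases : S = 3 * 2 ^ (k + 1) ∨ S = -(3 * 2 ^ (k + 1)) := by
      rcases hN with h | h <;> rw [hcount, hexp] at h
      · left; linarith
      · right; linarith
    have hn1 : n + 1 = 2 * k + 2 := by omega
    rcases hScases with h | h <;> rw [h, hn1] <;> ring
  -- compute S²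
  have hswap : S ^ 2 = ∑ w : K, ∑ x : K, χ (g x) * χ (g (x + w)) := by
    have h1 : S ^ 2 = ∑ x : K, ∑ y : K, χ (g x) * χ (g y) := by
      rw [sq, hS, Finset.sum_mul_sum]
    have h2' : ∀ x : K, ∑ y : K, χ (g x) * χ (g y) = ∑ w : K, χ (g x) * χ (g (x + w)) :=
      fun x => (Fintype.sum_equiv (Equiv.addLeft x) (fun w => χ (g x) * χ (g (x + w)))
        (fun y => χ (g x) * χ (g y)) (fun w => rfl)).symm
    rw [h1, Finset.sum_congr rfl (fun x _ => h2' x), Finset.sum_comm]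
  have hterm : ∀ w x : K, χ (g x) * χ (g (x + w)) = χ (hh w) * χ (L w x) := by
    intro w x
    calc χ (g x) * χ (g (x + w)) = χ (g x + g (x + w)) := (hχmul _ _).symm
      _ = χ (L w x + hh w) := by rw [hgL]
      _ = χ (hh w) * χ (L w x) := by rw [hχmul, mul_comm]
  set cpred : K → Prop := fun w => ∀ x : K, P (L w x) with hcp
  have hinner : ∀ w : K, (∑ x : K, χ (L w x)) = if cpred w then ((2:ℤ) ^ n) else 0 := by
    intro w
    by_cases hc : cpred w
    · rw [if_pos hc]
      have h1 : ∀ x ∈ (Finset.univ : Finset K), χ (L w x) = 1 := fun x _ => (hχone _).mpr (hc x)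
      rw [Finset.sum_congr rfl h1, Finset.sum_const, Finset.card_univ, hcard]
      push_cast; ring
    · rw [if_neg hc]
      rcases sum_pm_eq Finset.univ (fun x => χ (L w x)) (fun x _ => hχval _)
        (fun x1 _ x2 _ => by
          show χ (L w (x1 + x2)) = χ (L w x1) * χ (L w x2)
          rw [hLaddx w x1 x2, hχmul]) (fun _ _ _ _ => Finset.mem_univ _)
        hself with hall | h0
      · exact absurd (fun x => (hχone _).mp (hall x (Finset.mem_univ x))) hc
      · exact h0
  set Wc : Finset K := Finset.univ.filter cpred with hWc
  have houter : S ^ 2 = 2 ^ n * ∑ w ∈ Wc, χ (hh w) := by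
    rw [hswap]
    rw [Finset.sum_congr rfl (fun w _ => Finset.sum_congr rfl (fun x _ => hterm w x))]
    have e4 : ∀ w : K, ∑ x : K, χ (hh w) * χ (L w x)
        = χ (hh w) * (if cpred w then ((2:ℤ) ^ n) else 0) := by
      intro w; rw [← Finset.mul_sum, hinner w]
    rw [Finset.sum_congr rfl (fun w _ => e4 w)]
    simp only [mul_ite, mul_zero]
    rw [← Finset.sum_filter, ← hWc, ← Finset.sum_mul]
    ring
  have hWclosed : ∀ w1 ∈ Wc, ∀ w2 ∈ Wc, w1 + w2 ∈ Wc := by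
    intro w1 h1 w2 h2'
    simp only [hWc, Finset.mem_filter, Finset.mem_univ, true_and] at h1 h2' ⊢
    intro x; rw [hLaddw]; exact hPadd _ _ (h1 x) (h2' x)
  have hWmul : ∀ w1 ∈ Wc, ∀ w2 ∈ Wc, χ (hh (w1 + w2)) = χ (hh w1) * χ (hh w2) := by
    intro w1 h1 w2 h2'
    simp only [hWc, Finset.mem_filter, Finset.mem_univ, true_and] at h1 h2'
    rw [hhhadd, hχmul, hχmul, (hχone _).mpr (h1 w2), mul_one]
  have hpow_pos : (0:ℤ) < 9 * 2 ^ (n + 1) := by positivity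
  rcases sum_pm_eq Wc (fun w => χ (hh w)) (fun w _ => hχval _)
      (fun w1 h1 w2 h2' => by
        show χ (hh (w1 + w2)) = χ (hh w1) * χ (hh w2)
        exact hWmul w1 h1 w2 h2') hWclosed hself with hall | h0
  · -- S² = 2^n * |Wc|, hence |Wc| = 18, contradicting Lagrange
    have hSW : S ^ 2 = 2 ^ n * (Wc.card : ℤ) := by
      rw [houter, Finset.sum_congr rfl hall, Finset.sum_const]
      push_cast; ring
    have hWcard18 : Wc.card = 18 := by
      have h18 : (2:ℤ) ^ n * (Wc.card : ℤ) = 2 ^ n * 18 := by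
        rw [← hSW, hS2, pow_succ]; ring
      have := mul_left_cancel₀ (a := (2:ℤ) ^ n) (by positivity) h18
      exact_mod_cast this
    have hzero : cpred 0 := by
      intro x
      have hL0 : L 0 x = 0 := by simp only [hL]; ring
      rw [hL0]; exact ⟨0, by ring⟩
    have hdvd : Wc.card ∣ 2 ^ n := by
      let H : AddSubgroup K :=
        { carrier := {w : K | cpred w}
          add_mem' := fun {w1 w2} hw1 hw2 => by
            intro x; rw [hLaddw]; exact hPadd _ _ (hw1 x) (hw2 x)
          zero_mem' := hzero
          neg_mem' := fun {w} hw => by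
            show cpred (-w)
            rw [hneg w]; exact hw }
      have e : {w : K // cpred w} ≃ H := Equiv.subtypeEquivRight (fun w => Iff.rfl)
      have hcardH : Wc.card = Nat.card H := by
        rw [← Nat.card_congr e, Nat.card_eq_fintype_card, Fintype.card_subtype, hWc]
      rw [hcardH, ← hcard, ← Nat.card_eq_fintype_card]
      exact AddSubgroup.card_addSubgroup_dvd_card H
    rw [hWcard18] at hdvd
    have h3 : (3:ℕ) ∣ 2 ^ n := dvd_trans ⟨6, rfl⟩ hdvd
    have h32 := Nat.Prime.dvd_of_dvd_pow (p := 3) (m := 2) (by norm_num) h3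
    omega
  · rw [h0, mul_zero] at houter
    rw [houter] at hS2
    omega
end

section
/- Let A be a supersingular abelian variety over 𝔽_q (q = p^n) of dimension g with Frobenius characteristic polynomial P_A(X) = X^{2g} + a₁X^{2g−1} + ⋯ + a_g X^g + q a_{g−1} X^{g−1} + ⋯ + q^g. Then p^{⌈jn/2⌉} divides a_j for all 1 ≤ j ≤ g. In particular, for p = 2 and n odd, 2^{(n+1)/2} divides a₁, the negative of the trace of Frobenius. -/
open Polynomial

/-- If a prime power `p^k` divides `a^2`, then `p^⌈k/2⌉` divides `a`. -/
lemma aux_pow_div_two_dvd {p : ℕ} (hp : p.Prime) {a : ℤ} {k : ℕ}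
    (h : (p : ℤ) ^ k ∣ a ^ 2) : (p : ℤ) ^ ((k + 1) / 2) ∣ a := by
  rcases eq_or_ne a 0 with rfl | ha
  · simp
  have ha' : a.natAbs ≠ 0 := by simpa using ha
  have hnat : p ^ k ∣ a.natAbs ^ 2 := by
    have := Int.natAbs_dvd_natAbs.mpr h
    simpa [Int.natAbs_pow] using this
  have hfac : k ≤ (a.natAbs ^ 2).factorization p :=
    (hp.pow_dvd_iff_le_factorization (by positivity)).mp hnat
  rw [Nat.factorization_pow] at hfac
  simp only [Finsupp.smul_apply, smul_eq_mul] at hfac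
  have hle : (k + 1) / 2 ≤ a.natAbs.factorization p := by omega
  have hdvd : p ^ ((k + 1) / 2) ∣ a.natAbs :=
    (hp.pow_dvd_iff_le_factorization ha').mpr hle
  exact Int.natAbs_dvd_natAbs.mp (by simpa [Int.natAbs_pow] using hdvd)

/-- (Stichtenoth–Xing divisibility) Let `P ∈ ℤ[X]` be the characteristic
polynomial of Frobenius of a supersingular abelian variety of dimension `g`
over `𝔽_{p^n}`: `P` is monic of degree `2g` and every complex root `z` of `P`
is `√(p^n)` times a root of unity (encoded as `z^(2m) = p^(n·m)` for some
`m > 0`).  Writing `P = X^{2g} + a₁X^{2g−1} + ⋯`, i.e. `a_j = P.coeff (2g−j)`,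
one has `p^{⌈jn/2⌉} ∣ a_j` for all `1 ≤ j ≤ g`.  In particular for `p = 2`
and `n` odd, `2^{(n+1)/2}` divides `a₁`. -/
theorem supersingular_coeff_divisibility
    (p n g : ℕ) (hp : p.Prime) (hn : 0 < n) (hg : 0 < g)
    (P : Polynomial ℤ) (hmonic : P.Monic) (hdeg : P.natDegree = 2 * g)
    (hroots : ∀ z : ℂ, Polynomial.aeval z P = 0 →
      ∃ m : ℕ, 0 < m ∧ z ^ (2 * m) = (p : ℂ) ^ (n * m)) :
    (∀ j : ℕ, 1 ≤ j → j ≤ g → ((p : ℤ) ^ ((j * n + 1) / 2) ∣ P.coeff (2 * g - j))) ∧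
    (p = 2 → Odd n → (2 : ℤ) ^ ((n + 1) / 2) ∣ P.coeff (2 * g - 1)) := by
  have hp0 : (0 : ℝ) < p := by exact_mod_cast hp.pos
  -- the complex polynomial and its roots
  set Pc : Polynomial ℂ := P.map (Int.castRingHom ℂ) with hPcdef
  have hPcm : Pc.Monic := hmonic.map _
  have hdegc : Pc.natDegree = 2 * g := by
    rw [hPcdef, hmonic.natDegree_map]; exact hdeg
  have hcard : Multiset.card Pc.roots = Pc.natDegree :=
    splits_iff_card_roots.mp (IsAlgClosed.splits _)
  -- square root of q = p^n
  set s : ℂ := ((Real.sqrt ((p : ℝ) ^ n) : ℝ) : ℂ) with hsdef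
  have hs2 : s ^ 2 = (p : ℂ) ^ n := by
    rw [hsdef]
    norm_cast
    rw [Real.sq_sqrt (by positivity)]
  have hpc : ((p : ℂ)) ≠ 0 := Nat.cast_ne_zero.mpr hp.pos.ne'
  have hsne : s ≠ 0 := by
    intro h
    rw [h] at hs2
    exact (pow_ne_zero n hpc) (by simpa using hs2.symm)
  -- the normalized roots
  set W : Multiset ℂ := Pc.roots.map (fun z => z / s) with hWdef
  have hWint : ∀ w ∈ W, IsIntegral ℤ w := by
    intro w hw
    obtain ⟨z, hz, rfl⟩ := Multiset.mem_map.mp hw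
    have hz0 : Polynomial.aeval z P = 0 := by
      have := isRoot_of_mem_roots hz
      simpa [hPcdef, aeval_def, eval_map, IsRoot] using this
    obtain ⟨m, hm, hzm⟩ := hroots z hz0
    refine ⟨X ^ (2 * m) - 1, ?_, ?_⟩
    · have := monic_X_pow_sub_C (1 : ℤ) (n := 2 * m) (by omega)
      simpa using this
    · have hsm : s ^ (2 * m) = (p : ℂ) ^ (n * m) := by
        calc s ^ (2 * m) = (s ^ 2) ^ m := by rw [← pow_mul]
          _ = ((p : ℂ) ^ n) ^ m := by rw [hs2]
          _ = (p : ℂ) ^ (n * m) := by rw [← pow_mul]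
      have : (z / s) ^ (2 * m) = 1 := by
        rw [div_pow, hzm, hsm]
        exact div_self (pow_ne_zero _ hpc)
      simp [eval₂_sub, eval₂_pow, this]
  -- roots as scaled normalized roots
  have hroots_eq : Pc.roots = W.map (fun w => s • w) := by
    rw [hWdef, Multiset.map_map]
    conv_lhs => rw [← Multiset.map_id Pc.roots]
    refine Multiset.map_congr rfl fun z _ => ?_
    simp only [Function.comp, smul_eq_mul, id_eq]
    field_simp
  -- main divisibility statement
  have main : ∀ j : ℕ, 1 ≤ j → j ≤ g →
      ((p : ℤ) ^ ((j * n + 1) / 2) ∣ P.coeff (2 * g - j)) := by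
    intro j hj1 hjg
    set a : ℤ := P.coeff (2 * g - j) with hadef
    -- Vieta
    have hjle : 2 * g - j ≤ Pc.natDegree := by omega
    have hvieta := Polynomial.coeff_eq_esymm_roots_of_card hcard hjle
    rw [hdegc, hPcm.leadingCoeff, one_mul] at hvieta
    have hsub : 2 * g - (2 * g - j) = j := by omega
    rw [hsub] at hvieta
    have hcoeff : (a : ℂ) = (-1) ^ j * Pc.roots.esymm j := by
      rw [hadef, ← hvieta, hPcdef, coeff_map]
      simp
    -- esymm scaling
    have hesymm : Pc.roots.esymm j = s ^ j * W.esymm j := by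
      rw [hroots_eq, ← Multiset.pow_smul_esymm, smul_eq_mul]
    -- squared identity
    have hsq : (a : ℂ) ^ 2 = (p : ℂ) ^ (n * j) * (W.esymm j) ^ 2 := by
      rw [hcoeff, hesymm]
      have : ((-1 : ℂ) ^ j) ^ 2 = 1 := by
        rw [← pow_mul, mul_comm j 2, pow_mul]; simp
      rw [mul_pow, mul_pow, this, one_mul, ← pow_mul, mul_comm j 2, pow_mul, hs2,
        ← pow_mul]
    -- integrality of esymm
    have hEint : IsIntegral ℤ ((W.esymm j) ^ 2) := by
      have h1 : W.esymm j ∈ integralClosure ℤ ℂ := by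
        rw [Multiset.esymm]
        refine Subalgebra.multiset_sum_mem _ ?_
        intro x hx
        obtain ⟨t, ht, rfl⟩ := Multiset.mem_map.mp hx
        refine Subalgebra.multiset_prod_mem _ ?_
        intro w hw
        exact hWint w (Multiset.mem_of_le (Multiset.mem_powersetCard.mp ht).1 hw)
      exact (h1 : IsIntegral ℤ (W.esymm j)).pow 2
    -- rationality
    have hpq : ((p : ℚ)) ≠ 0 := Nat.cast_ne_zero.mpr hp.pos.ne'
    have hpne : ((p : ℚ) ^ (n * j)) ≠ 0 := pow_ne_zero _ hpq
    set r : ℚ := (a : ℚ) ^ 2 / (p : ℚ) ^ (n * j) with hrdef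
    have hr : (algebraMap ℚ ℂ) r = (W.esymm j) ^ 2 := by
      have hcast : ((r : ℚ) : ℂ) = (a : ℂ) ^ 2 / (p : ℂ) ^ (n * j) := by
        rw [hrdef]; push_cast; ring
      have : (algebraMap ℚ ℂ) r = ((r : ℚ) : ℂ) := rfl
      rw [this, hcast, hsq]
      field_simp
    have hrint : IsIntegral ℤ r := by
      have hinj : Function.Injective (algebraMap ℚ ℂ) := (algebraMap ℚ ℂ).injective
      rw [← isIntegral_algebraMap_iff hinj, hr]
      exact hEint
    obtain ⟨k, hk⟩ := IsIntegrallyClosed.isIntegral_iff.mp hrint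
    -- p^(n*j) ∣ a^2
    have hdvd2 : (p : ℤ) ^ (n * j) ∣ a ^ 2 := by
      refine ⟨k, ?_⟩
      have : (a : ℚ) ^ 2 = (p : ℚ) ^ (n * j) * (k : ℚ) := by
        have hk' : (k : ℚ) = r := hk
        rw [hk', hrdef]
        field_simp
      exact_mod_cast this
    have := aux_pow_div_two_dvd hp hdvd2
    rwa [Nat.mul_comm n j] at this
  refine ⟨main, ?_⟩
  intro hp2 _
  have := main 1 le_rfl hg
  rw [hp2] at this
  simpa using this
end
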